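/- arXiv:2506.07874 — 2 statements merged into one kernel-verified Lean document; each statement's English description precedes it below -/
import Mathlib

section
/- Let C be a category, F : C → C an endofunctor, and α : F ⇒ 1_C, β : 1_C ⇒ F natural transformations with α ∘ β = id (the identity natural transformation on 1_C). Then F reflects limits: for any diagram D : I → C and any cone over D whose image under F is a limit cone of F ∘ D, the original cone is a limit cone of D. -/
open CategoryTheory Limits

/-- If an endofunctor `F` admits natural transformations `α : F ⟶ 𝟭 C` and
`β : 𝟭 C ⟶ F` with `β ≫ α = 𝟙 (𝟭 C)`, then `F` reflects limits: any cone whose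
image under `F` is a limit cone is itself a limit cone. -/
theorem stmt_0 {C : Type*} [Category C] (F : C ⥤ C)
    (α : F ⟶ 𝟭 C) (β : 𝟭 C ⟶ F) (hαβ : β ≫ α = 𝟙 (𝟭 C))
    {J : Type*} [Category J] (D : J ⥤ C) (c : Cone D)
    (hc : IsLimit (F.mapCone c)) : Nonempty (IsLimit c) := by
  have hba : ∀ X : C, β.app X ≫ α.app X = 𝟙 X := fun X =>
    congrArg (fun t => NatTrans.app t X) hαβ
  refine ⟨⟨fun s => β.app s.pt ≫ hc.lift (F.mapCone s) ≫ α.app c.pt, ?_, ?_⟩⟩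
  · intro s j
    have h1 : α.app c.pt ≫ c.π.app j = F.map (c.π.app j) ≫ α.app (D.obj j) :=
      (α.naturality (c.π.app j)).symm
    have h2 : hc.lift (F.mapCone s) ≫ F.map (c.π.app j) = F.map (s.π.app j) :=
      hc.fac (F.mapCone s) j
    have h3 : β.app s.pt ≫ F.map (s.π.app j) = s.π.app j ≫ β.app (D.obj j) :=
      (β.naturality (s.π.app j)).symm
    simp only [Category.assoc]
    rw [h1, reassoc_of% h2, reassoc_of% h3, hba, Category.comp_id]
  · intro s m hm
    have hFm : F.map m = hc.lift (F.mapCone s) := by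
      apply hc.uniq (F.mapCone s)
      intro j
      simp [← F.map_comp, hm j]
    have hβ : β.app s.pt ≫ F.map m = m ≫ β.app c.pt := (β.naturality m).symm
    rw [← hFm, ← Category.assoc, hβ, Category.assoc, hba, Category.comp_id]
end

section
/- Let C be a category, F : C → C an endofunctor, and α : F ⇒ 1_C, β : 1_C ⇒ F natural transformations with α ∘ β = id. Then F reflects colimits. -/
/-!
`β` and `α` exhibit `D` as a retract of `D ⋙ F` and `c.pt` as a retract of `F.obj c.pt`, compatibly
with the cocone maps. Such a retract of a colimit cocone is again a colimit: a cocone `t` under `D`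
gives one under `D ⋙ F` by precomposing with `α`, and the map `c.pt ⟶ t.pt` is `β` followed by
the map out of `F.mapCocone c` that it induces.
-/

open CategoryTheory Limits

namespace CategoryTheory.Limits.IsColimit

variable {J C : Type*} [Category J] [Category C] {D D' : J ⥤ C}

def ofRetract {c : Cocone D} {c' : Cocone D'} (hc' : IsColimit c')
    (h : Retract D D') (k : Retract c.pt c'.pt)
    (hi : ∀ j, c.ι.app j ≫ k.i = h.i.app j ≫ c'.ι.app j)
    (hr : ∀ j, c'.ι.app j ≫ k.r = h.r.app j ≫ c.ι.app j) : IsColimit c where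
  desc t := k.i ≫ hc'.desc ((Cocone.precompose h.r).obj t)
  fac t j := by simp [reassoc_of% hi, ← NatTrans.comp_app_assoc]
  uniq t m hm := by
    have hdesc : k.r ≫ m = hc'.desc ((Cocone.precompose h.r).obj t) :=
      hc'.hom_ext fun j => by simp [reassoc_of% hr, hm]
    rw [← hdesc, k.retract_assoc]

end CategoryTheory.Limits.IsColimit

/-- If an endofunctor `F` admits natural transformations `α : F ⟶ 𝟭 C` and
`β : 𝟭 C ⟶ F` with `β ≫ α = 𝟙 (𝟭 C)`, then `F` reflects colimits. -/
theorem stmt_1 {C : Type*} [Category C] (F : C ⥤ C)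
    (α : F ⟶ 𝟭 C) (β : 𝟭 C ⟶ F) (hαβ : β ≫ α = 𝟙 (𝟭 C))
    {J : Type*} [Category J] (D : J ⥤ C) (c : Cocone D)
    (hc : IsColimit (F.mapCocone c)) : Nonempty (IsColimit c) := by
  let diagramRetract : Retract D (D ⋙ F) :=
    ⟨Functor.whiskerLeft D β, Functor.whiskerLeft D α, by
      ext j; exact NatTrans.congr_app hαβ (D.obj j)⟩
  let pointRetract : Retract c.pt (F.obj c.pt) :=
    ⟨β.app c.pt, α.app c.pt, NatTrans.congr_app hαβ c.pt⟩
  exact ⟨hc.ofRetract diagramRetract pointRetract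
    (fun j => β.naturality (c.ι.app j)) (fun j => α.naturality (c.ι.app j))⟩
end
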